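/- arXiv:0708.3357 — 2 statements merged into one kernel-verified Lean document; each statement's English description precedes it below -/
import Mathlib

section
/- Let α, β ∈ ℂ with |α| = 1 and τ(z) = αz + β; set σ = ν + μ and ξ = μ·conj(α)·β. Then for every C^∞ function f : ℂ → ℂ and every z ∈ ℂ, (Lf)(z) = −(∂²f/∂z∂z̄)(z) − ((σz+ξ)(∂f/∂z)(z) − (σ·conj(z)+conj(ξ))(∂f/∂z̄)(z)) + |σz+ξ|²·f(z); that is, L reduces to the operator L^σ_ξ. -/
noncomputable section

open Complex

/-- The group `G = 𝕋 ⋉ ℂ`, with elements `[a,b]`, acting on `ℂ` by `z ↦ a z + b`. -/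
@[ext]
structure GT : Type where
  a : Circle
  b : ℂ

namespace GT

instance : Group GT where
  mul g h := ⟨g.a * h.a, (g.a : ℂ) * h.b + g.b⟩
  one := ⟨1, 0⟩
  inv g := ⟨g.a⁻¹, -((g.a⁻¹ : ℂ) * g.b)⟩
  mul_assoc g h k := by
    refine GT.ext (mul_assoc _ _ _) ?_
    show ((g.a * h.a : Circle) : ℂ) * k.b + ((g.a : ℂ) * h.b + g.b)
        = (g.a : ℂ) * ((h.a : ℂ) * k.b + h.b) + g.b
    push_cast; ring
  one_mul g := by
    refine GT.ext (one_mul _) ?_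
    show ((1 : Circle) : ℂ) * g.b + 0 = g.b
    simp
  mul_one g := by
    refine GT.ext (mul_one _) ?_
    show (g.a : ℂ) * 0 + g.b = g.b
    simp
  inv_mul_cancel g := by
    refine GT.ext (inv_mul_cancel _) ?_
    show ((g.a⁻¹ : Circle) : ℂ) * g.b + -(((g.a : ℂ))⁻¹ * g.b) = 0
    push_cast; ring

/-- The action of `G` on `ℂ` : `[a,b]·z = a z + b`. -/
def act (g : GT) (z : ℂ) : ℂ := (g.a : ℂ) * z + g.b

end GT

/-- The Hermitian product `⟨z,w⟩ = z·conj w`. -/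
def herm (z w : ℂ) : ℂ := z * (starRingEnd ℂ) w

/-- The automorphic factor `j^α(g,z) = exp(2 i α Im⟨z, g⁻¹·0⟩)`. -/
def jfac (α : ℝ) (g : GT) (z : ℂ) : ℂ :=
  Complex.exp (2 * Complex.I * (α : ℂ) * ((herm z (GT.act g⁻¹ 0)).im : ℂ))

/-- The Wirtinger derivative `∂f/∂z = (1/2)(∂f/∂x − i ∂f/∂y)`. -/
def wderiv (f : ℂ → ℂ) (z : ℂ) : ℂ :=
  (1 / 2 : ℂ) * (fderiv ℝ f z 1 - Complex.I * fderiv ℝ f z Complex.I)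

/-- The anti-Wirtinger derivative `∂f/∂z̄ = (1/2)(∂f/∂x + i ∂f/∂y)`. -/
def wderivBar (f : ℂ → ℂ) (z : ℂ) : ℂ :=
  (1 / 2 : ℂ) * (fderiv ℝ f z 1 + Complex.I * fderiv ℝ f z Complex.I)

/-- The Euclidean Laplacian `Δ = 4 ∂²/∂z∂z̄`. -/
def lap (f : ℂ → ℂ) (z : ℂ) : ℂ := 4 * wderiv (fun w => wderivBar f w) z

/-- `S(z) = ν z + μ (τ(z)·∂τ̄/∂z̄(z) − τ̄(z)·∂τ/∂z̄(z))`. -/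
def Sfun (ν μ : ℝ) (τ : ℂ → ℂ) (z : ℂ) : ℂ :=
  (ν : ℂ) * z + (μ : ℂ) *
    (τ z * wderivBar (fun w => (starRingEnd ℂ) (τ w)) z - (starRingEnd ℂ) (τ z) * wderivBar τ z)

/-- `B(z) = ν + μ(|∂τ/∂z(z)|² − |∂τ/∂z̄(z)|²)`. -/
def Bfun (ν μ : ℝ) (τ : ℂ → ℂ) (z : ℂ) : ℝ :=
  ν + μ * (‖wderiv τ z‖ ^ 2 - ‖wderivBar τ z‖ ^ 2)

/-- The magnetic Schrödinger operator `L`. -/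
def Lop (ν μ : ℝ) (τ : ℂ → ℂ) (f : ℂ → ℂ) (z : ℂ) : ℂ :=
  - wderiv (fun w => wderivBar f w) z
    - (Sfun ν μ τ z * wderiv f z - (starRingEnd ℂ) (Sfun ν μ τ z) * wderivBar f z)
    + ((‖Sfun ν μ τ z‖ : ℂ)) ^ 2 * f z
    - ((μ : ℂ) / 4) *
        (τ z * lap (fun w => (starRingEnd ℂ) (τ w)) z - (starRingEnd ℂ) (τ z) * lap τ z) * f z

/-- The annihilation operator `A f = ∂f/∂z̄ + S f`. -/
def Aop (ν μ : ℝ) (τ : ℂ → ℂ) (f : ℂ → ℂ) (z : ℂ) : ℂ :=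
  wderivBar f z + Sfun ν μ τ z * f z

/-- The creation operator `Ã f = −∂f/∂z + conj(S) f`. -/
def Atop (ν μ : ℝ) (τ : ℂ → ℂ) (f : ℂ → ℂ) (z : ℂ) : ℂ :=
  - wderiv f z + (starRingEnd ℂ) (Sfun ν μ τ z) * f z

/-- `J(g,z) = j^ν(g,z)·j^μ(ρ(g),τ(z))`. -/
def Jfun (ν μ : ℝ) (ρ : GT → GT) (τ : ℂ → ℂ) (g : GT) (z : ℂ) : ℂ :=
  jfac ν g z * jfac μ (ρ g) (τ z)

/-- `φ_ρ(g,g') = Im(ν⟨g⁻¹·0,g'·0⟩ + μ⟨ρ(g⁻¹)·0, ρ(g')·0⟩)`. -/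
def phiRho (ν μ : ℝ) (ρ : GT → GT) (g g' : GT) : ℝ :=
  ((ν : ℂ) * herm (GT.act g⁻¹ 0) (GT.act g' 0)
    + (μ : ℂ) * herm (GT.act (ρ g⁻¹) 0) (GT.act (ρ g') 0)).im

/-- Membership in the lattice `Γ = ℤω₁ + ℤω₂`. -/
def inLattice (ω₁ ω₂ : ℂ) (γ : ℂ) : Prop := ∃ m n : ℤ, γ = (m : ℂ) * ω₁ + (n : ℂ) * ω₂

/-- Mixed `Γ`-automorphic form of type `(ν,μ)` w.r.t. the pair `(ρ,τ)`. -/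
def MixedForm (ν μ : ℝ) (ρ : GT → GT) (τ : ℂ → ℂ) (ω₁ ω₂ : ℂ) (F : ℂ → ℂ) : Prop :=
  ContDiff ℝ (⊤ : ℕ∞) F ∧ ∀ γ : ℂ, inLattice ω₁ ω₂ γ → ∀ z : ℂ,
    F (z + γ) = jfac (-ν) ⟨(1 : Circle), γ⟩ z * jfac (-μ) (ρ ⟨(1 : Circle), γ⟩) (τ z) * F z

/-- The Laguerre polynomial `L_k`. -/
def laguerre (k : ℕ) (x : ℝ) : ℝ :=
  ∑ j ∈ Finset.range (k + 1), (-1) ^ j * (k.choose j : ℝ) * x ^ j / (Nat.factorial j : ℝ)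


/-- The multiplier `χ_τ(γ) = exp(iφ(γ) − 2iμ Im⟨τ(0), ρ([1,γ])⁻¹·0⟩)`. -/
def chiTau (μ : ℝ) (ρ : GT → GT) (τ : ℂ → ℂ) (φ : ℂ → ℝ) (γ : ℂ) : ℂ :=
  Complex.exp (Complex.I * (φ γ : ℂ)
    - 2 * Complex.I * (μ : ℂ) * ((herm (τ 0) (GT.act (ρ ⟨1, γ⟩)⁻¹ 0)).im : ℂ))

/-- The eigenprojector kernel `K_k`. -/
def Kker (B : ℝ) (φ : ℂ → ℝ) (k : ℕ) (z w : ℂ) : ℂ :=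
  ((2 * B / Real.pi : ℝ) : ℂ) * Complex.exp (-Complex.I * ((φ z - φ w : ℝ) : ℂ)) *
    Complex.exp (2 * Complex.I * (B : ℂ) * ((herm z w).im : ℂ)) *
    Complex.exp (-((B * ‖z - w‖ ^ 2 : ℝ) : ℂ)) *
    ((laguerre k (2 * B * ‖z - w‖ ^ 2) : ℝ) : ℂ)

/-- The kernel `K^σ_ξ;k`. -/
def Kxi (σ : ℝ) (ξ : ℂ) (k : ℕ) (z w : ℂ) : ℂ :=
  ((2 * σ / Real.pi : ℝ) : ℂ) * Complex.exp (2 * Complex.I * ((herm (z - w) ξ).im : ℂ)) *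
    Complex.exp (2 * Complex.I * (σ : ℂ) * ((herm z w).im : ℂ)) *
    Complex.exp (-((σ * ‖z - w‖ ^ 2 : ℝ) : ℂ)) *
    ((laguerre k (2 * σ * ‖z - w‖ ^ 2) : ℝ) : ℂ)

/-- `m`-fold iterate of the creation operator `Ã`. -/
def AtopIter (ν μ : ℝ) (τ : ℂ → ℂ) (m : ℕ) (f : ℂ → ℂ) : ℂ → ℂ :=
  (fun u z => Atop ν μ τ u z)^[m] f

/-! For affine `τ(w) = α w + β` the anti-Wirtinger derivatives `∂τ/∂z̄ = 0` and
`∂τ̄/∂z̄ = conj α` are constant, so both Laplacians in `L` vanish and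
`S(z) = (ν + μ|α|²) z + μ conj(α) β`, which is `σ z + ξ` when `|α| = 1`. -/

open ComplexConjugate

lemma HasFDerivAt.wderivBar_eq {f : ℂ → ℂ} {L : ℂ →L[ℝ] ℂ} {z : ℂ} (h : HasFDerivAt f L z) :
    wderivBar f z = (1 / 2 : ℂ) * (L 1 + I * L I) := by
  rw [wderivBar, h.fderiv]

lemma wderiv_const (c z : ℂ) : wderiv (fun _ : ℂ => c) z = 0 := by
  simp [wderiv]

lemma lap_eq_zero_of_wderivBar_eq_const {f : ℂ → ℂ} {c : ℂ} (h : ∀ w, wderivBar f w = c)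
    (z : ℂ) : lap f z = 0 := by
  rw [lap, funext h, wderiv_const, mul_zero]

section Affine

variable (α β : ℂ)

lemma hasFDerivAt_affine (z : ℂ) :
    HasFDerivAt (fun w : ℂ => α * w + β) (α • ContinuousLinearMap.id ℝ ℂ) z := by
  simpa using ((hasFDerivAt_id (𝕜 := ℝ) z).const_mul α).add_const β

lemma wderivBar_affine (z : ℂ) : wderivBar (fun w => α * w + β) z = 0 := by
  rw [(hasFDerivAt_affine α β z).wderivBar_eq]
  simp only [smul_apply, ContinuousLinearMap.id_apply, smul_eq_mul]
  linear_combination (α / 2) * I_mul_I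

lemma wderivBar_conj_affine (z : ℂ) :
    wderivBar (fun w => conj (α * w + β)) z = conj α := by
  have h : HasFDerivAt (fun w => conj (α * w + β))
      ((conjCLE : ℂ →L[ℝ] ℂ).comp (α • ContinuousLinearMap.id ℝ ℂ)) z :=
    conjCLE.hasFDerivAt.comp z (hasFDerivAt_affine α β z)
  rw [h.wderivBar_eq]
  simp only [ContinuousLinearMap.comp_apply, ContinuousLinearEquiv.coe_coe, conjCLE_apply,
    smul_apply, ContinuousLinearMap.id_apply, smul_eq_mul, map_mul, map_one,
    conj_I]
  linear_combination (-(conj α / 2)) * I_mul_I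

lemma Sfun_affine (ν μ : ℝ) (z : ℂ) :
    Sfun ν μ (fun w => α * w + β) z = ν * z + μ * ((‖α‖ : ℂ) ^ 2 * z + conj α * β) := by
  rw [Sfun, wderivBar_conj_affine, wderivBar_affine, ← mul_conj']
  ring

lemma Lop_affine (ν μ : ℝ) (f : ℂ → ℂ) (z : ℂ) :
    Lop ν μ (fun w => α * w + β) f z =
      - wderiv (fun w => wderivBar f w) z
        - (Sfun ν μ (fun w => α * w + β) z * wderiv f z
            - conj (Sfun ν μ (fun w => α * w + β) z) * wderivBar f z)
        + (‖Sfun ν μ (fun w => α * w + β) z‖ : ℂ) ^ 2 * f z := by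
  rw [Lop, lap_eq_zero_of_wderivBar_eq_const (wderivBar_affine α β),
    lap_eq_zero_of_wderivBar_eq_const (wderivBar_conj_affine α β)]
  ring

end Affine

theorem statement13_general (ν μ : ℝ) (α β : ℂ)
    (hα : ‖α‖ = 1)
    (f : ℂ → ℂ) (z : ℂ) :
    Lop ν μ (fun w => α * w + β) f z =
      - wderiv (fun w => wderivBar f w) z
        - ((((ν + μ : ℝ) : ℂ) * z + (μ : ℂ) * (starRingEnd ℂ) α * β) * wderiv f z
            - (((ν + μ : ℝ) : ℂ) * (starRingEnd ℂ) z
                + (starRingEnd ℂ) ((μ : ℂ) * (starRingEnd ℂ) α * β)) * wderivBar f z)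
        + ((‖((ν + μ : ℝ) : ℂ) * z + (μ : ℂ) * (starRingEnd ℂ) α * β‖ : ℂ)) ^ 2
            * f z := by
  have hS : Sfun ν μ (fun w => α * w + β) z = ((ν + μ : ℝ) : ℂ) * z + μ * conj α * β := by
    rw [Sfun_affine, hα]
    push_cast
    ring
  rw [Lop_affine, hS, map_add, map_mul, conj_ofReal]

theorem statement13 (ν μ : ℝ) (hν : 0 < ν) (hμ : 0 < μ) (α β : ℂ)
    (hα : ‖α‖ = 1)
    (f : ℂ → ℂ) (hf : ContDiff ℝ (⊤ : ℕ∞) f) (z : ℂ) :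
    Lop ν μ (fun w => α * w + β) f z =
      - wderiv (fun w => wderivBar f w) z
        - ((((ν + μ : ℝ) : ℂ) * z + (μ : ℂ) * (starRingEnd ℂ) α * β) * wderiv f z
            - (((ν + μ : ℝ) : ℂ) * (starRingEnd ℂ) z
                + (starRingEnd ℂ) ((μ : ℂ) * (starRingEnd ℂ) α * β)) * wderivBar f z)
        + ((‖((ν + μ : ℝ) : ℂ) * z + (μ : ℂ) * (starRingEnd ℂ) α * β‖ : ℂ)) ^ 2
            * f z :=
  statement13_general ν μ α β hα f z
end
end

section
/- Assume B(z) is constant with value B and φ is a gauge function. Then the transformation W f = e^{iφ}·f intertwines L and the special Hermite (Landau) operator L^B of magnitude B: for every C^∞ function f : ℂ → ℂ and every z ∈ ℂ, e^{iφ(z)}·(Lf)(z) = (L^B g)(z) where g = e^{iφ}·f and (L^B g)(z) = −(∂²g/∂z∂z̄)(z) − B(z(∂g/∂z)(z) − conj(z)(∂g/∂z̄)(z)) + B²|z|²·g(z). -/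
noncomputable section

open Complex

/-!
Put `P = S − B z`. The gauge equation says `∂̄(e^{iφ}) = e^{iφ} P`, and since `φ` is real also
`∂(e^{iφ}) = −e^{iφ} P̄`; hence `∂̄(e^{iφ} f) = e^{iφ}(∂̄f + P f)` and `∂(e^{iφ} f) = e^{iφ}(∂f − P̄ f)`.
Differentiating once more, `∂∂̄(e^{iφ} f)` picks up the term `(∂P) f`, and when `B(z) ≡ B` one has
`∂S = B + μ(τ ∂∂̄τ̄ − τ̄ ∂∂̄τ)`, so `∂P` is exactly the potential `(μ/4)(τΔτ̄ − τ̄Δτ)` of `L`.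
The remaining terms match after writing `|S|² = S S̄`.
-/

open ComplexConjugate

section Wirtinger

variable {f g : ℂ → ℂ} {z : ℂ}

lemma wderiv_add (hf : DifferentiableAt ℝ f z) (hg : DifferentiableAt ℝ g z) :
    wderiv (fun w => f w + g w) z = wderiv f z + wderiv g z := by
  simp only [wderiv, fderiv_fun_add hf hg, add_apply]
  ring

lemma wderiv_sub (hf : DifferentiableAt ℝ f z) (hg : DifferentiableAt ℝ g z) :
    wderiv (fun w => f w - g w) z = wderiv f z - wderiv g z := by
  simp only [wderiv, fderiv_fun_sub hf hg, sub_apply]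
  ring

lemma wderiv_mul (hf : DifferentiableAt ℝ f z) (hg : DifferentiableAt ℝ g z) :
    wderiv (fun w => f w * g w) z = wderiv f z * g z + f z * wderiv g z := by
  simp only [wderiv, fderiv_fun_mul hf hg, add_apply,
    smul_apply, smul_eq_mul]
  ring

lemma wderivBar_mul (hf : DifferentiableAt ℝ f z) (hg : DifferentiableAt ℝ g z) :
    wderivBar (fun w => f w * g w) z = wderivBar f z * g z + f z * wderivBar g z := by
  simp only [wderivBar, fderiv_fun_mul hf hg, add_apply,
    smul_apply, smul_eq_mul]
  ring

lemma wderiv_const_mul (c : ℂ) (hf : DifferentiableAt ℝ f z) :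
    wderiv (fun w => c * f w) z = c * wderiv f z := by
  simp only [wderiv, fderiv_const_mul hf, smul_apply, smul_eq_mul]
  ring

lemma wderivBar_const_mul (c : ℂ) (hf : DifferentiableAt ℝ f z) :
    wderivBar (fun w => c * f w) z = c * wderivBar f z := by
  simp only [wderivBar, fderiv_const_mul hf, smul_apply, smul_eq_mul]
  ring

lemma wderiv_id (z : ℂ) : wderiv (fun w => w) z = 1 := by
  simp only [wderiv, fderiv_fun_id, ContinuousLinearMap.id_apply]
  linear_combination (-1 / 2 : ℂ) * I_sq

lemma wderiv_cexp (hf : DifferentiableAt ℝ f z) :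
    wderiv (fun w => exp (f w)) z = exp (f z) * wderiv f z := by
  simp only [wderiv, hf.hasFDerivAt.cexp.fderiv, smul_apply, smul_eq_mul]
  ring

lemma wderivBar_cexp (hf : DifferentiableAt ℝ f z) :
    wderivBar (fun w => exp (f w)) z = exp (f z) * wderivBar f z := by
  simp only [wderivBar, hf.hasFDerivAt.cexp.fderiv, smul_apply, smul_eq_mul]
  ring

lemma fderiv_conj_apply (hf : DifferentiableAt ℝ f z) (v : ℂ) :
    fderiv ℝ (fun w => conj (f w)) z v = conj (fderiv ℝ f z v) :=
  congrArg (· v) (conjCLE.hasFDerivAt.comp z hf.hasFDerivAt).fderiv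

lemma wderiv_conj (hf : DifferentiableAt ℝ f z) :
    wderiv (fun w => conj (f w)) z = conj (wderivBar f z) := by
  simp only [wderiv, wderivBar, fderiv_conj_apply hf, map_mul, map_add, map_div₀, map_one,
    map_ofNat, conj_I]
  ring

lemma wderivBar_conj (hf : DifferentiableAt ℝ f z) :
    wderivBar (fun w => conj (f w)) z = conj (wderiv f z) := by
  simp only [wderiv, wderivBar, fderiv_conj_apply hf, map_mul, map_sub, map_div₀, map_one,
    map_ofNat, conj_I]
  ring

lemma wderiv_ofReal_comp {φ : ℂ → ℝ} (hφ : DifferentiableAt ℝ φ z) :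
    wderiv (fun w => (φ w : ℂ)) z = conj (wderivBar (fun w => (φ w : ℂ)) z) := by
  have hφ' : DifferentiableAt ℝ (fun w => (φ w : ℂ)) z := ofRealCLM.differentiableAt.comp z hφ
  simpa only [conj_ofReal] using wderiv_conj hφ'

lemma ContDiff.wderivBar {m n : WithTop ℕ∞} (hf : ContDiff ℝ n f) (hmn : m + 1 ≤ n) :
    ContDiff ℝ m (fun w => wderivBar f w) := by
  have hDf := hf.fderiv_right hmn
  exact contDiff_const.mul ((hDf.clm_apply contDiff_const).add
    (contDiff_const.mul (hDf.clm_apply contDiff_const)))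

end Wirtinger

section Gauge

variable {φ : ℂ → ℝ} {f P : ℂ → ℂ} {z p : ℂ}

lemma wderivBar_exp_I_mul_ofReal (hφ : DifferentiableAt ℝ φ z)
    (hp : wderivBar (fun w => (φ w : ℂ)) z = -I * p) :
    wderivBar (fun w => exp (I * φ w)) z = exp (I * φ z) * p := by
  have hφ' : DifferentiableAt ℝ (fun w => (φ w : ℂ)) z := ofRealCLM.differentiableAt.comp z hφ
  rw [wderivBar_cexp ((differentiableAt_const I).fun_mul hφ'), wderivBar_const_mul I hφ', hp]
  linear_combination (-(exp (I * φ z) * p)) * I_sq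

lemma wderiv_exp_I_mul_ofReal (hφ : DifferentiableAt ℝ φ z)
    (hp : wderivBar (fun w => (φ w : ℂ)) z = -I * p) :
    wderiv (fun w => exp (I * φ w)) z = -(exp (I * φ z) * conj p) := by
  have hφ' : DifferentiableAt ℝ (fun w => (φ w : ℂ)) z := ofRealCLM.differentiableAt.comp z hφ
  rw [wderiv_cexp ((differentiableAt_const I).fun_mul hφ'), wderiv_const_mul I hφ',
    wderiv_ofReal_comp hφ, hp, map_mul, map_neg, conj_I]
  linear_combination (exp (I * φ z) * conj p) * I_sq

lemma wderivBar_exp_I_mul_ofReal_mul (hφ : DifferentiableAt ℝ φ z) (hf : DifferentiableAt ℝ f z)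
    (hp : wderivBar (fun w => (φ w : ℂ)) z = -I * p) :
    wderivBar (fun w => exp (I * φ w) * f w) z = exp (I * φ z) * (wderivBar f z + p * f z) := by
  have hE : DifferentiableAt ℝ (fun w => exp (I * φ w)) z :=
    ((differentiableAt_const I).fun_mul (ofRealCLM.differentiableAt.comp z hφ)).cexp
  rw [wderivBar_mul hE hf, wderivBar_exp_I_mul_ofReal hφ hp]
  ring

lemma wderiv_exp_I_mul_ofReal_mul (hφ : DifferentiableAt ℝ φ z) (hf : DifferentiableAt ℝ f z)
    (hp : wderivBar (fun w => (φ w : ℂ)) z = -I * p) :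
    wderiv (fun w => exp (I * φ w) * f w) z = exp (I * φ z) * (wderiv f z - conj p * f z) := by
  have hE : DifferentiableAt ℝ (fun w => exp (I * φ w)) z :=
    ((differentiableAt_const I).fun_mul (ofRealCLM.differentiableAt.comp z hφ)).cexp
  rw [wderiv_mul hE hf, wderiv_exp_I_mul_ofReal hφ hp]
  ring

lemma wderiv_wderivBar_exp_I_mul_ofReal_mul (hφ : Differentiable ℝ φ) (hf : Differentiable ℝ f)
    (hf' : DifferentiableAt ℝ (fun w => wderivBar f w) z) (hP : DifferentiableAt ℝ P z)
    (hφP : ∀ w, wderivBar (fun u => (φ u : ℂ)) w = -I * P w) :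
    wderiv (fun w => wderivBar (fun u => exp (I * φ u) * f u) w) z =
      exp (I * φ z) * (wderiv (fun w => wderivBar f w) z + wderiv P z * f z + P z * wderiv f z
        - conj (P z) * (wderivBar f z + P z * f z)) := by
  have hE : DifferentiableAt ℝ (fun w => exp (I * φ w)) z :=
    ((differentiableAt_const I).fun_mul (ofRealCLM.differentiableAt.comp z (hφ z))).cexp
  have hPf : DifferentiableAt ℝ (fun w => P w * f w) z := hP.fun_mul (hf z)
  have hbar : (fun w => wderivBar (fun u => exp (I * φ u) * f u) w) =
      fun w => exp (I * φ w) * (wderivBar f w + P w * f w) :=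
    funext fun w => wderivBar_exp_I_mul_ofReal_mul (hφ w) (hf w) (hφP w)
  rw [hbar, wderiv_mul hE (hf'.fun_add hPf), wderiv_add hf' hPf, wderiv_mul hP (hf z),
    wderiv_exp_I_mul_ofReal (hφ z) (hφP z)]
  ring

end Gauge

section MagneticPotential

variable {ν μ : ℝ} {τ : ℂ → ℂ}

lemma contDiff_Sfun {m n : WithTop ℕ∞} (hτ : ContDiff ℝ n τ) (hmn : m + 1 ≤ n) :
    ContDiff ℝ m (Sfun ν μ τ) := by
  have hτ' : ContDiff ℝ n (fun w => conj (τ w)) := conjCLE.contDiff.comp hτ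
  have hm : m ≤ n := le_trans (by simp) hmn
  exact (contDiff_const.mul contDiff_id).add (contDiff_const.mul
    (((hτ.of_le hm).mul (hτ'.wderivBar hmn)).sub ((hτ'.of_le hm).mul (hτ.wderivBar hmn))))

lemma wderiv_Sfun (hτ : ContDiff ℝ 2 τ) (z : ℂ) :
    wderiv (Sfun ν μ τ) z = Bfun ν μ τ z
      + μ * (τ z * wderiv (fun w => wderivBar (fun u => conj (τ u)) w) z
        - conj (τ z) * wderiv (fun w => wderivBar τ w) z) := by
  have hτ' : ContDiff ℝ 2 (fun w => conj (τ w)) := conjCLE.contDiff.comp hτ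
  have hdτ : DifferentiableAt ℝ τ z := (hτ.differentiable two_ne_zero) z
  have hdτ' : DifferentiableAt ℝ (fun w => conj (τ w)) z := (hτ'.differentiable two_ne_zero) z
  have hdτ₁ : DifferentiableAt ℝ (fun w => wderivBar τ w) z :=
    ((hτ.wderivBar (by norm_num)).differentiable one_ne_zero) z
  have hdτ₁' : DifferentiableAt ℝ (fun w => wderivBar (fun u => conj (τ u)) w) z :=
    ((hτ'.wderivBar (by norm_num)).differentiable one_ne_zero) z
  have hl := (hdτ.fun_mul hdτ₁').fun_sub (hdτ'.fun_mul hdτ₁)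
  change wderiv (fun w => (ν : ℂ) * w + μ * (τ w * wderivBar (fun u => conj (τ u)) w
    - conj (τ w) * wderivBar τ w)) z = _
  rw [wderiv_add ((differentiableAt_const _).fun_mul differentiableAt_fun_id)
    ((differentiableAt_const _).fun_mul hl),
    wderiv_const_mul _ differentiableAt_fun_id, wderiv_id, wderiv_const_mul _ hl,
    wderiv_sub (hdτ.fun_mul hdτ₁') (hdτ'.fun_mul hdτ₁), wderiv_mul hdτ hdτ₁', wderiv_mul hdτ' hdτ₁,
    wderivBar_conj hdτ, wderiv_conj hdτ, Bfun, mul_comm (conj _), mul_conj, mul_conj,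
    normSq_eq_norm_sq, normSq_eq_norm_sq]
  push_cast
  ring

end MagneticPotential

theorem statement16_general (ν μ : ℝ) (τ : ℂ → ℂ) (hτ : ContDiff ℝ (⊤ : ℕ∞) τ)
    (B : ℝ) (hB : ∀ z : ℂ, Bfun ν μ τ z = B)
    (φ : ℂ → ℝ) (hφs : ContDiff ℝ (⊤ : ℕ∞) φ)
    (hφ : ∀ z : ℂ, wderivBar (fun w => (φ w : ℂ)) z = -Complex.I * (Sfun ν μ τ z - (B : ℂ) * z))
    (f : ℂ → ℂ) (hf : ContDiff ℝ (⊤ : ℕ∞) f) (z : ℂ) :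
    Complex.exp (Complex.I * (φ z : ℂ)) * Lop ν μ τ f z =
      - wderiv (fun w => wderivBar (fun u => Complex.exp (Complex.I * (φ u : ℂ)) * f u) w) z
        - (B : ℂ) * (z * wderiv (fun u => Complex.exp (Complex.I * (φ u : ℂ)) * f u) z
            - (starRingEnd ℂ) z * wderivBar (fun u => Complex.exp (Complex.I * (φ u : ℂ)) * f u) z)
        + ((B : ℂ)) ^ 2 * ((‖z‖ : ℂ)) ^ 2
            * (Complex.exp (Complex.I * (φ z : ℂ)) * f z) := by
  have hS : Differentiable ℝ (Sfun ν μ τ) :=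
    (contDiff_Sfun (m := 1) hτ (WithTop.coe_le_coe.mpr le_top)).differentiable one_ne_zero
  have hP : DifferentiableAt ℝ (fun w => Sfun ν μ τ w - B * w) z :=
    (hS z).fun_sub ((differentiableAt_const _).fun_mul differentiableAt_fun_id)
  have hdφ : Differentiable ℝ φ := hφs.differentiable (by simp)
  have hdf : Differentiable ℝ f := hf.differentiable (by simp)
  have hdf' : DifferentiableAt ℝ (fun w => wderivBar f w) z :=
    ((hf.wderivBar (m := 1) (WithTop.coe_le_coe.mpr le_top)).differentiable one_ne_zero) z
  have hdP : wderiv (fun w => Sfun ν μ τ w - B * w) z =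
      μ * (τ z * wderiv (fun w => wderivBar (fun u => conj (τ u)) w) z
        - conj (τ z) * wderiv (fun w => wderivBar τ w) z) := by
    rw [wderiv_sub (hS z) ((differentiableAt_const _).fun_mul differentiableAt_fun_id),
      wderiv_const_mul _ differentiableAt_fun_id, wderiv_id,
      wderiv_Sfun (hτ.of_le (WithTop.coe_le_coe.mpr le_top)), hB]
    ring
  rw [wderiv_wderivBar_exp_I_mul_ofReal_mul hdφ hdf hdf' hP hφ, hdP,
    wderiv_exp_I_mul_ofReal_mul (hdφ z) (hdf z) (hφ z),
    wderivBar_exp_I_mul_ofReal_mul (hdφ z) (hdf z) (hφ z)]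
  simp only [Lop, lap, ← ofReal_pow, ← normSq_eq_norm_sq, normSq_eq_conj_mul_self, map_sub,
    map_mul, conj_ofReal]
  push_cast
  ring

theorem statement16 (ν μ : ℝ) (τ : ℂ → ℂ) (hτ : ContDiff ℝ (⊤ : ℕ∞) τ)
    (B : ℝ) (hB : ∀ z : ℂ, Bfun ν μ τ z = B)
    (φ : ℂ → ℝ) (hφs : ContDiff ℝ (⊤ : ℕ∞) φ) (hφ0 : φ 0 = 0)
    (hφ : ∀ z : ℂ, wderivBar (fun w => (φ w : ℂ)) z = -Complex.I * (Sfun ν μ τ z - (B : ℂ) * z))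
    (f : ℂ → ℂ) (hf : ContDiff ℝ (⊤ : ℕ∞) f) (z : ℂ) :
    Complex.exp (Complex.I * (φ z : ℂ)) * Lop ν μ τ f z =
      - wderiv (fun w => wderivBar (fun u => Complex.exp (Complex.I * (φ u : ℂ)) * f u) w) z
        - (B : ℂ) * (z * wderiv (fun u => Complex.exp (Complex.I * (φ u : ℂ)) * f u) z
            - (starRingEnd ℂ) z * wderivBar (fun u => Complex.exp (Complex.I * (φ u : ℂ)) * f u) z)
        + ((B : ℂ)) ^ 2 * ((‖z‖ : ℂ)) ^ 2
            * (Complex.exp (Complex.I * (φ z : ℂ)) * f z) :=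
  statement16_general ν μ τ hτ B hB φ hφs hφ f hf z
end
end
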